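/- Let n, d, r be positive integers, τ > 0, U ∈ ℝ^{n×r} with UᵀU = I_r, V ∈ ℝ^{d×r} with VᵀV = I_r, and s : {1,…,r} → ℝ with s_i ≥ 0 for all i. Set X̂ = U · diag(s) · Vᵀ and X* = U · diag(max(s_i − τ, 0)) · Vᵀ. Then X* is a global minimizer over X ∈ ℝ^{n×d} of the function X ↦ τ‖X‖_* + (1/2)‖X − X̂‖_F²; that is, for every X ∈ ℝ^{n×d}, τ‖X*‖_* + (1/2)‖X* − X̂‖_F² ≤ τ‖X‖_* + (1/2)‖X − X̂‖_F². -/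

import Mathlib

/-!
Write `X̂ = X* + W` with `W = U diag(min(sᵢ, τ)) Vᵀ`. Because `0 ≤ min(sᵢ, τ) ≤ τ`, the matrix `W`
stretches no vector by more than `τ`; diagonalising `XᵀX` and applying Cauchy–Schwarz column by
column then gives `⟨X, W⟩ ≤ τ‖X‖_*` for every `X`. On the other hand
`max(sᵢ - τ, 0) · min(sᵢ, τ) = τ · max(sᵢ - τ, 0)` gives `⟨X*, W⟩ = τ‖X*‖_*`, so `W / τ` is a
subgradient of the nuclear norm at `X*`. Expanding
`‖X - X̂‖_F² = ‖X - X*‖_F² - 2⟨X - X*, W⟩ + ‖W‖_F²` finishes the proof.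
-/

open Matrix

/-- Nuclear norm of a real matrix: tr((AᵀA)^{1/2}), i.e. the sum of the singular values. -/
noncomputable def nuclearNorm {m k : ℕ} (A : Matrix (Fin m) (Fin k) ℝ) : ℝ :=
  ((Matrix.posSemidef_conjTranspose_mul_self A).1.eigenvectorUnitary.1 *
    Matrix.diagonal ((RCLike.ofReal : ℝ → ℝ) ∘ Real.sqrt ∘ (Matrix.posSemidef_conjTranspose_mul_self A).1.eigenvalues) *
    (star (Matrix.posSemidef_conjTranspose_mul_self A).1.eigenvectorUnitary : Matrix (Fin k) (Fin k) ℝ)).trace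

/-- Squared Frobenius norm of a real matrix. -/
noncomputable def frobSq {m k : ℕ} (A : Matrix (Fin m) (Fin k) ℝ) : ℝ :=
  ∑ i, ∑ j, (A i j) ^ 2

def frobInner {m n : Type*} [Fintype m] [Fintype n] (A B : Matrix m n ℝ) : ℝ :=
  ∑ i, ∑ j, A i j * B i j

section FrobeniusInner

variable {m n : Type*} [Fintype m] [Fintype n]

lemma frobInner_sub_left (A B C : Matrix m n ℝ) :
    frobInner (A - B) C = frobInner A C - frobInner B C := by
  simp only [frobInner, Matrix.sub_apply, sub_mul, Finset.sum_sub_distrib]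

lemma frobInner_eq_trace (A B : Matrix m n ℝ) : frobInner A B = (Aᵀ * B).trace := by
  simp only [frobInner, trace, diag_apply, mul_apply, transpose_apply]
  exact Finset.sum_comm

lemma frobInner_eq_sum_col (A B : Matrix m n ℝ) :
    frobInner A B = ∑ j, ∑ i, A i j * B i j :=
  Finset.sum_comm

lemma frobInner_mul_right_of_mul_transpose_eq_one [DecidableEq n] (A B : Matrix m n ℝ)
    {Q : Matrix n n ℝ} (hQ : Q * Qᵀ = 1) : frobInner (A * Q) (B * Q) = frobInner A B := by
  rw [frobInner_eq_trace, frobInner_eq_trace, transpose_mul, Matrix.mul_assoc,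
    trace_mul_comm, Matrix.mul_assoc, Matrix.mul_assoc, hQ, Matrix.mul_one]

end FrobeniusInner

lemma frobSq_nonneg {m k : ℕ} (A : Matrix (Fin m) (Fin k) ℝ) : 0 ≤ frobSq A := by
  unfold frobSq; positivity

lemma frobSq_sub {m k : ℕ} (A B : Matrix (Fin m) (Fin k) ℝ) :
    frobSq (A - B) = frobSq A - 2 * frobInner A B + frobSq B := by
  simp only [frobSq, frobInner, Matrix.sub_apply, Finset.mul_sum, ← Finset.sum_add_distrib,
    ← Finset.sum_sub_distrib]
  congr! 2; ring

section Isometry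

variable {m n : Type*} [Fintype m] [Fintype n] [DecidableEq n] {U : Matrix m n ℝ}

lemma dotProduct_mulVec_self_of_transpose_mul_self_eq_one (hU : Uᵀ * U = 1) (y : n → ℝ) :
    (U *ᵥ y) ⬝ᵥ (U *ᵥ y) = y ⬝ᵥ y := by
  rw [dotProduct_mulVec, ← vecMul_transpose, vecMul_vecMul, hU, vecMul_one]

lemma dotProduct_transpose_mulVec_self_le (hU : Uᵀ * U = 1) (q : m → ℝ) :
    (Uᵀ *ᵥ q) ⬝ᵥ (Uᵀ *ᵥ q) ≤ q ⬝ᵥ q := by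
  set z := Uᵀ *ᵥ q
  -- `‖z‖² = ⟨U z, q⟩ ≤ ‖U z‖ ‖q‖ = ‖z‖ ‖q‖`
  have hpair : (U *ᵥ z) ⬝ᵥ q = z ⬝ᵥ z := by
    rw [dotProduct_comm, dotProduct_mulVec, ← mulVec_transpose]
  have hcs : ((U *ᵥ z) ⬝ᵥ q) ^ 2 ≤ ((U *ᵥ z) ⬝ᵥ (U *ᵥ z)) * (q ⬝ᵥ q) := by
    simpa only [dotProduct, sq] using Finset.sum_mul_sq_le_sq_mul_sq Finset.univ (U *ᵥ z) q
  rw [hpair, dotProduct_mulVec_self_of_transpose_mul_self_eq_one hU] at hcs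
  have hz : 0 ≤ z ⬝ᵥ z := by simpa using dotProduct_self_star_nonneg z
  have hq : 0 ≤ q ⬝ᵥ q := by simpa using dotProduct_self_star_nonneg q
  nlinarith

end Isometry

section Thresholding

variable {α : Type*} [CommRing α] [LinearOrder α] [IsStrictOrderedRing α] (s τ : α)

lemma max_sub_zero_add_min : max (s - τ) 0 + min s τ = s := by
  rcases le_total s τ with h | h
  · simp [max_eq_right (sub_nonpos.mpr h), min_eq_left h]
  · simp [max_eq_left (sub_nonneg.mpr h), min_eq_right h]

lemma max_sub_zero_mul_min : max (s - τ) 0 * min s τ = τ * max (s - τ) 0 := by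
  rcases le_total s τ with h | h
  · simp [max_eq_right (sub_nonpos.mpr h)]
  · simp [max_eq_left (sub_nonneg.mpr h), min_eq_right h, mul_comm]

end Thresholding

section DiagonalFactorization

variable {m n ι : Type*} [Fintype m] [Fintype ι] [DecidableEq ι]
  {U : Matrix m ι ℝ} {V : Matrix n ι ℝ}

lemma transpose_mul_diagonal_mul_transpose (hU : Uᵀ * U = 1) (a b : ι → ℝ) :
    (U * diagonal a * Vᵀ)ᵀ * (U * diagonal b * Vᵀ) = V * diagonal (a * b) * Vᵀ := by
  simp only [transpose_mul, transpose_transpose, diagonal_transpose, Matrix.mul_assoc]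
  rw [← Matrix.mul_assoc Uᵀ, hU, Matrix.one_mul, ← Matrix.mul_assoc (diagonal a),
    diagonal_mul_diagonal]
  rfl

lemma frobInner_mul_diagonal_mul_transpose [Fintype n] (hU : Uᵀ * U = 1) (hV : Vᵀ * V = 1)
    (a b : ι → ℝ) :
    frobInner (U * diagonal a * Vᵀ) (U * diagonal b * Vᵀ) = ∑ i, a i * b i := by
  rw [frobInner_eq_trace, transpose_mul_diagonal_mul_transpose hU, trace_mul_cycle, hV,
    Matrix.one_mul, trace_diagonal]
  rfl

lemma mul_diagonal_mul_transpose_mulVec_dotProduct_self_le [Fintype n] (hU : Uᵀ * U = 1)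
    (hV : Vᵀ * V = 1) {τ : ℝ} {w : ι → ℝ} (hw₀ : ∀ i, 0 ≤ w i) (hwτ : ∀ i, w i ≤ τ) (q : n → ℝ) :
    ((U * diagonal w * Vᵀ) *ᵥ q) ⬝ᵥ ((U * diagonal w * Vᵀ) *ᵥ q) ≤ τ ^ 2 * (q ⬝ᵥ q) := by
  set z := Vᵀ *ᵥ q
  have hdiag : (diagonal w *ᵥ z) ⬝ᵥ (diagonal w *ᵥ z) ≤ τ ^ 2 * (z ⬝ᵥ z) := by
    simp only [dotProduct, mulVec_diagonal, Finset.mul_sum]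
    refine Finset.sum_le_sum fun i _ => ?_
    have hw2 : w i * w i ≤ τ ^ 2 := by nlinarith [hw₀ i, hwτ i]
    nlinarith [mul_le_mul_of_nonneg_right hw2 (mul_self_nonneg (z i))]
  calc ((U * diagonal w * Vᵀ) *ᵥ q) ⬝ᵥ ((U * diagonal w * Vᵀ) *ᵥ q)
      = (diagonal w *ᵥ z) ⬝ᵥ (diagonal w *ᵥ z) := by
        rw [← mulVec_mulVec, ← mulVec_mulVec,
          dotProduct_mulVec_self_of_transpose_mul_self_eq_one hU]
    _ ≤ τ ^ 2 * (z ⬝ᵥ z) := hdiag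
    _ ≤ τ ^ 2 * (q ⬝ᵥ q) := by
        gcongr
        exact dotProduct_transpose_mulVec_self_le hV q

end DiagonalFactorization

section Spectral

variable {m n : Type*} [Fintype m] [Fintype n] [DecidableEq n]

lemma eigenvectorUnitary_mul_transpose {A : Matrix n n ℝ} (hA : A.IsHermitian) :
    (hA.eigenvectorUnitary : Matrix n n ℝ) * (hA.eigenvectorUnitary : Matrix n n ℝ)ᵀ = 1 := by
  simpa [star_eq_conjTranspose] using mem_unitaryGroup_iff.mp hA.eigenvectorUnitary.2

lemma eigenvectorBasis_dotProduct_self {A : Matrix n n ℝ} (hA : A.IsHermitian) (j : n) :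
    ⇑(hA.eigenvectorBasis j) ⬝ᵥ ⇑(hA.eigenvectorBasis j) = 1 := by
  have := congrFun (congrFun (mem_unitaryGroup_iff'.mp hA.eigenvectorUnitary.2) j) j
  simpa [mul_apply, dotProduct] using this

lemma mulVec_eigenvectorBasis_dotProduct_self (X : Matrix m n ℝ) (hH : (Xᴴ * X).IsHermitian)
    (j : n) :
    (X *ᵥ ⇑(hH.eigenvectorBasis j)) ⬝ᵥ (X *ᵥ ⇑(hH.eigenvectorBasis j)) = hH.eigenvalues j := by
  rw [dotProduct_mulVec, ← mulVec_transpose, mulVec_mulVec,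
    ← conjTranspose_eq_transpose_of_trivial, hH.mulVec_eigenvectorBasis, smul_dotProduct,
    eigenvectorBasis_dotProduct_self, smul_eq_mul, mul_one]

end Spectral

section NuclearNorm

variable {m k : ℕ}

lemma nuclearNorm_eq_sum_sqrt_eigenvalues (X : Matrix (Fin m) (Fin k) ℝ) :
    nuclearNorm X = ∑ j, √((posSemidef_conjTranspose_mul_self X).1.eigenvalues j) := by
  rw [nuclearNorm, trace_mul_cycle, Unitary.coe_star_mul_self, Matrix.one_mul, trace_diagonal]
  rfl

lemma nuclearNorm_eq_trace_cfc_sqrt (X : Matrix (Fin m) (Fin k) ℝ) :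
    nuclearNorm X = (cfc Real.sqrt (Xᴴ * X)).trace := by
  rw [(posSemidef_conjTranspose_mul_self X).1.cfc_eq, IsHermitian.cfc,
    Unitary.conjStarAlgAut_apply]
  rfl

open scoped MatrixOrder in
lemma nuclearNorm_eq_trace_of_sq_eq {X : Matrix (Fin m) (Fin k) ℝ}
    {S : Matrix (Fin k) (Fin k) ℝ} (hS : S.PosSemidef) (hSX : S ^ 2 = Xᴴ * X) :
    nuclearNorm X = S.trace := by
  rw [nuclearNorm_eq_trace_cfc_sqrt, ← hSX, ← cfcₙ_eq_cfc (hf0 := Real.sqrt_zero),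
    ← CFC.sqrt_eq_real_sqrt _ (by rw [hSX]; exact (posSemidef_conjTranspose_mul_self X).nonneg),
    CFC.sqrt_sq S hS.nonneg]

lemma nuclearNorm_mul_diagonal_mul_transpose {r : Type*} [Fintype r] [DecidableEq r]
    {U : Matrix (Fin m) r ℝ} {V : Matrix (Fin k) r ℝ} (hU : Uᵀ * U = 1) (hV : Vᵀ * V = 1)
    {a : r → ℝ} (ha : ∀ i, 0 ≤ a i) : nuclearNorm (U * diagonal a * Vᵀ) = ∑ i, a i := by
  have hS : (V * diagonal a * Vᵀ).PosSemidef := by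
    simpa [conjTranspose_eq_transpose_of_trivial] using
      (posSemidef_diagonal_iff.mpr ha).mul_mul_conjTranspose_same V
  have hSX : (V * diagonal a * Vᵀ) ^ 2 = (U * diagonal a * Vᵀ)ᴴ * (U * diagonal a * Vᵀ) := by
    nth_rewrite 1 [sq, ← hS.1.eq]
    simp only [conjTranspose_eq_transpose_of_trivial, transpose_mul_diagonal_mul_transpose hU,
      transpose_mul_diagonal_mul_transpose hV]
  rw [nuclearNorm_eq_trace_of_sq_eq hS hSX, trace_mul_cycle, hV, Matrix.one_mul, trace_diagonal]

end NuclearNorm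

lemma frobInner_le_mul_nuclearNorm {m k : ℕ} {τ : ℝ} (hτ : 0 ≤ τ)
    {B : Matrix (Fin m) (Fin k) ℝ} (hB : ∀ q, (B *ᵥ q) ⬝ᵥ (B *ᵥ q) ≤ τ ^ 2 * (q ⬝ᵥ q))
    (X : Matrix (Fin m) (Fin k) ℝ) :
    frobInner X B ≤ τ * nuclearNorm X := by
  set hH := (posSemidef_conjTranspose_mul_self X).1
  set Q : Matrix (Fin k) (Fin k) ℝ := ↑hH.eigenvectorUnitary
  set v : Fin k → Fin k → ℝ := fun j => ⇑(hH.eigenvectorBasis j)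
  have hBv : ∀ j, √((B *ᵥ v j) ⬝ᵥ (B *ᵥ v j)) ≤ τ := fun j => by
    refine Real.sqrt_le_iff.mpr ⟨hτ, ?_⟩
    simpa [v, eigenvectorBasis_dotProduct_self] using hB (v j)
  calc frobInner X B = frobInner (X * Q) (B * Q) :=
        (frobInner_mul_right_of_mul_transpose_eq_one _ _
          (eigenvectorUnitary_mul_transpose hH)).symm
    _ = ∑ j, (X *ᵥ v j) ⬝ᵥ (B *ᵥ v j) := frobInner_eq_sum_col _ _
    _ ≤ ∑ j, √((X *ᵥ v j) ⬝ᵥ (X *ᵥ v j)) * √((B *ᵥ v j) ⬝ᵥ (B *ᵥ v j)) :=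
        Finset.sum_le_sum fun j _ => by
          simpa only [dotProduct, sq] using Real.sum_mul_le_sqrt_mul_sqrt _ (X *ᵥ v j) (B *ᵥ v j)
    _ ≤ ∑ j, √(hH.eigenvalues j) * τ := Finset.sum_le_sum fun j _ => by
        rw [mulVec_eigenvectorBasis_dotProduct_self]
        exact mul_le_mul_of_nonneg_left (hBv j) (Real.sqrt_nonneg _)
    _ = τ * nuclearNorm X := by
        rw [nuclearNorm_eq_sum_sqrt_eigenvalues, Finset.mul_sum]
        simp only [mul_comm]

lemma nuclear_prox_le_of_subgradient {m k : ℕ} {τ : ℝ} {Xstar W : Matrix (Fin m) (Fin k) ℝ}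
    (hcert : frobInner Xstar W = τ * nuclearNorm Xstar) (X : Matrix (Fin m) (Fin k) ℝ)
    (hX : frobInner X W ≤ τ * nuclearNorm X) :
    τ * nuclearNorm Xstar + 1 / 2 * frobSq (Xstar - (Xstar + W)) ≤
      τ * nuclearNorm X + 1 / 2 * frobSq (X - (Xstar + W)) := by
  have hstar : frobSq (Xstar - (Xstar + W)) = frobSq W := by
    simp only [sub_add_cancel_left, frobSq, Matrix.neg_apply, neg_sq]
  have hX' : frobSq (X - (Xstar + W)) =
      frobSq (X - Xstar) - 2 * frobInner (X - Xstar) W + frobSq W := by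
    rw [← frobSq_sub, sub_add_eq_sub_sub]
  rw [hstar, hX', frobInner_sub_left]
  linarith [frobSq_nonneg (X - Xstar)]

theorem svt_isMinimizer_general (n d r : ℕ)
    (τ : ℝ) (hτ : 0 < τ)
    (U : Matrix (Fin n) (Fin r) ℝ) (hU : Uᵀ * U = 1)
    (V : Matrix (Fin d) (Fin r) ℝ) (hV : Vᵀ * V = 1)
    (s : Fin r → ℝ) (hs : ∀ i, 0 ≤ s i) :
    ∀ X : Matrix (Fin n) (Fin d) ℝ,
      τ * nuclearNorm (U * Matrix.diagonal (fun i => max (s i - τ) 0) * Vᵀ) +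
          (1 / 2) * frobSq (U * Matrix.diagonal (fun i => max (s i - τ) 0) * Vᵀ -
            U * Matrix.diagonal s * Vᵀ) ≤
        τ * nuclearNorm X + (1 / 2) * frobSq (X - U * Matrix.diagonal s * Vᵀ) := by
  set g : Fin r → ℝ := fun i => max (s i - τ) 0
  set w : Fin r → ℝ := fun i => min (s i) τ
  have hsplit : U * diagonal s * Vᵀ = U * diagonal g * Vᵀ + U * diagonal w * Vᵀ := by
    rw [← Matrix.add_mul, ← Matrix.mul_add, diagonal_add]
    exact congrArg (fun t => U * diagonal t * Vᵀ) (funext fun i => (max_sub_zero_add_min _ _).symm)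
  have hcert : frobInner (U * diagonal g * Vᵀ) (U * diagonal w * Vᵀ) =
      τ * nuclearNorm (U * diagonal g * Vᵀ) := by
    rw [frobInner_mul_diagonal_mul_transpose hU hV,
      nuclearNorm_mul_diagonal_mul_transpose hU hV fun i => le_max_right _ _, Finset.mul_sum]
    exact Finset.sum_congr rfl fun i _ => max_sub_zero_mul_min _ _
  have hcontract := mul_diagonal_mul_transpose_mulVec_dotProduct_self_le hU hV (w := w)
    (fun i => le_min (hs i) hτ.le) (fun i => min_le_right _ _)
  intro X
  rw [hsplit]
  exact nuclear_prox_le_of_subgradient hcert X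
    (frobInner_le_mul_nuclearNorm hτ.le hcontract X)

/-- singular value thresholding. If X̂ = U diag(s) Vᵀ with UᵀU = I, VᵀV = I
    and s ≥ 0, then X* = U diag(max(s−τ,0)) Vᵀ globally minimizes
    X ↦ τ‖X‖_* + (1/2)‖X − X̂‖_F². -/
theorem svt_isMinimizer (n d r : ℕ) (hn : 0 < n) (hd : 0 < d) (hr : 0 < r)
    (τ : ℝ) (hτ : 0 < τ)
    (U : Matrix (Fin n) (Fin r) ℝ) (hU : Uᵀ * U = 1)
    (V : Matrix (Fin d) (Fin r) ℝ) (hV : Vᵀ * V = 1)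
    (s : Fin r → ℝ) (hs : ∀ i, 0 ≤ s i) :
    ∀ X : Matrix (Fin n) (Fin d) ℝ,
      τ * nuclearNorm (U * Matrix.diagonal (fun i => max (s i - τ) 0) * Vᵀ) +
          (1 / 2) * frobSq (U * Matrix.diagonal (fun i => max (s i - τ) 0) * Vᵀ -
            U * Matrix.diagonal s * Vᵀ) ≤
        τ * nuclearNorm X + (1 / 2) * frobSq (X - U * Matrix.diagonal s * Vᵀ) :=
  svt_isMinimizer_general n d r τ hτ U hU V hV s hs
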